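/- arXiv:math-ph/9907009 — 2 statements merged into one kernel-verified Lean document; each statement's English description precedes it below -/
import Mathlib

section
/- For real λ, μ > 0 with λ ≠ μ, the L² inner product ⟨G_λ, G_μ⟩ = ∫_{ℝ³} G_λ(x) G_μ(x) dx equals 1/(4π(√λ + √μ)). -/
/-!
The product `G_λ G_μ` is radial, equal to `e^{-(√λ+√μ) r} / (16 π² r²)` at radius `r`. In polar
coordinates the volume element `4π r² dr` cancels the singularity, leaving
`(1/4π) ∫₀^∞ e^{-(√λ+√μ) r} dr = 1 / (4π (√λ + √μ))`.
-/

open MeasureTheory Real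

noncomputable abbrev E3 := EuclideanSpace ℝ (Fin 3)

/-- Yukawa potential `G_λ`. -/
noncomputable def G (lam : ℝ) (x : E3) : ℝ :=
  Real.exp (-Real.sqrt lam * ‖x‖) / (4 * π * ‖x‖)

open Set

theorem EuclideanSpace.integral_fun_norm_fin_three {F : Type*} [NormedAddCommGroup F]
    [NormedSpace ℝ F] (f : ℝ → F) :
    ∫ x : EuclideanSpace ℝ (Fin 3), f ‖x‖ = (4 * π) • ∫ r in Ioi (0 : ℝ), r ^ 2 • f r := by
  rw [integral_fun_norm_addHaar volume f, finrank_euclideanSpace_fin, measureReal_def,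
    EuclideanSpace.volume_ball_fin_three, ENNReal.ofReal_one, one_pow, one_mul,
    ENNReal.toReal_ofReal (by positivity), ← Nat.cast_smul_eq_nsmul ℝ, smul_smul]
  congr 1
  push_cast
  ring

theorem integral_exp_neg_mul_Ioi_zero {c : ℝ} (hc : 0 < c) :
    ∫ r in Ioi (0 : ℝ), exp (-c * r) = 1 / c := by
  rw [integral_exp_mul_Ioi (neg_neg_of_pos hc), mul_zero, exp_zero]
  field_simp

theorem EuclideanSpace.integral_exp_neg_mul_norm_div_sq_fin_three {c : ℝ} (hc : 0 < c) :
    ∫ x : EuclideanSpace ℝ (Fin 3), exp (-c * ‖x‖) / ‖x‖ ^ 2 = 4 * π / c := by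
  calc ∫ x : EuclideanSpace ℝ (Fin 3), exp (-c * ‖x‖) / ‖x‖ ^ 2
      = 4 * π * ∫ r in Ioi (0 : ℝ), r ^ 2 * (exp (-c * r) / r ^ 2) :=
      integral_fun_norm_fin_three fun r ↦ exp (-c * r) / r ^ 2
    _ = 4 * π * ∫ r in Ioi (0 : ℝ), exp (-c * r) := by
      congr 1
      refine setIntegral_congr_fun measurableSet_Ioi fun r (hr : 0 < r) ↦ ?_
      field_simp
    _ = 4 * π / c := by
      rw [integral_exp_neg_mul_Ioi_zero hc, mul_one_div]

theorem G_mul_G (lam mu : ℝ) (x : E3) :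
    G lam x * G mu x = exp (-(√lam + √mu) * ‖x‖) / ‖x‖ ^ 2 / (16 * π ^ 2) := by
  rw [G, G, neg_add, add_mul, exp_add]
  ring

theorem stmt_1_general (lam mu : ℝ) (hlam : 0 < lam) (hmu : 0 < mu) :
    ∫ x : E3, G lam x * G mu x =
      1 / (4 * π * (Real.sqrt lam + Real.sqrt mu)) := by
  have hc : 0 < √lam + √mu := add_pos (sqrt_pos.2 hlam) (sqrt_pos.2 hmu)
  simp_rw [G_mul_G, integral_div, EuclideanSpace.integral_exp_neg_mul_norm_div_sq_fin_three hc]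
  field_simp
  ring

theorem stmt_1 (lam mu : ℝ) (hlam : 0 < lam) (hmu : 0 < mu) (hne : lam ≠ mu) :
    ∫ x : E3, G lam x * G mu x =
      1 / (4 * π * (Real.sqrt lam + Real.sqrt mu)) :=
  stmt_1_general lam mu hlam hmu
end

section
/- Let ρ be a spherically symmetric probability density on ℝ³ with bounded support, ρ_r(x) = r^{-3}ρ(x/r), and m_r := m - (8πe²/(3c²)) E(ρ_r) the renormalized mass. Then lim_{r→0} ⟨(-Δ+λ)^{-1}ρ_r, ρ_r⟩ / m_r = -3c²/(8πe²) for every λ > 0. -/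
/-!
Substituting `x = r • u` in both variables gives `⟨(-Δ+λ)⁻¹ρ_r, ρ_r⟩ = r⁻¹ ⟨(-Δ+r²λ)⁻¹ρ, ρ⟩`
and `E(ρ_r) = r⁻¹ E(ρ)`, so the quotient equals `⟨(-Δ+r²λ)⁻¹ρ, ρ⟩ / (r m - K E(ρ))` with
`K = 8πe²/(3c²)`. Since `0 ≤ G_μ ≤ G_0` pointwise, dominated convergence makes
`μ ↦ ⟨(-Δ+μ)⁻¹ρ, ρ⟩` continuous, with value `E(ρ)` at `μ = 0`; hence the quotient tends
to `E(ρ) / (-K E(ρ)) = -1/K`.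
-/

open MeasureTheory Real Filter

/-- Coulomb energy of a density on ℝ³. -/
noncomputable def coulombEnergy (ρ : E3 → ℝ) : ℝ :=
  (1 / (4 * π)) * ∫ x : E3, ∫ y : E3, ρ x * ρ y / ‖x - y‖

/-- Scaled density `ρ_r(x) = r⁻³ ρ(x/r)`. -/
noncomputable def scaled (ρ : E3 → ℝ) (r : ℝ) (x : E3) : ℝ :=
  r ^ (-3 : ℤ) * ρ (r⁻¹ • x)

/-- `⟨(-Δ+λ)⁻¹ ρ_r, ρ_r⟩` expressed via the Yukawa kernel. -/
noncomputable def yukawaPairing (ρ : E3 → ℝ) (lam r : ℝ) : ℝ :=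
  ∫ x : E3, ∫ y : E3, scaled ρ r x * G lam (x - y) * scaled ρ r y

/-- Renormalized mass `m_r = m - (8πe²/(3c²)) E(ρ_r)`. -/
noncomputable def m_r (ρ : E3 → ℝ) (m c e r : ℝ) : ℝ :=
  m - (8 * π * e ^ 2 / (3 * c ^ 2)) * coulombEnergy (scaled ρ r)

lemma G_zero (z : E3) : G 0 z = (4 * π * ‖z‖)⁻¹ := by
  simp [G]

lemma abs_G_le (μ : ℝ) (z : E3) : |G μ z| ≤ G 0 z := by
  rw [G_zero, G, abs_div, abs_of_pos (Real.exp_pos _), abs_of_nonneg (by positivity),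
    div_eq_mul_inv]
  refine mul_le_of_le_one_left (by positivity) (Real.exp_le_one_iff.mpr ?_)
  exact mul_nonpos_of_nonpos_of_nonneg (neg_nonpos.mpr (Real.sqrt_nonneg μ)) (norm_nonneg z)

lemma norm_mul_G_mul_le_G_zero (a b μ : ℝ) (z : E3) :
    ‖a * G μ z * b‖ ≤ ‖a * G 0 z * b‖ := by
  have h : ‖G μ z‖ ≤ ‖G 0 z‖ := (abs_G_le μ z).trans (le_abs_self _)
  simp only [norm_mul]
  gcongr

lemma continuous_G_param (z : E3) : Continuous fun μ : ℝ => G μ z := by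
  unfold G
  fun_prop

lemma measurable_G (μ : ℝ) : Measurable (G μ) := by
  unfold G
  fun_prop

lemma G_smul {r : ℝ} (hr : 0 < r) (μ : ℝ) (z : E3) : G μ (r • z) = r⁻¹ * G (r ^ 2 * μ) z := by
  rw [G, G, norm_smul, Real.norm_of_nonneg hr.le, Real.sqrt_mul (sq_nonneg r), Real.sqrt_sq hr.le]
  field_simp

noncomputable def yukawaEnergy (ρ : E3 → ℝ) (μ : ℝ) : ℝ :=
  ∫ x : E3, ∫ y : E3, ρ x * G μ (x - y) * ρ y

lemma coulombEnergy_eq_yukawaEnergy_zero (ρ : E3 → ℝ) : coulombEnergy ρ = yukawaEnergy ρ 0 := by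
  rw [coulombEnergy, yukawaEnergy, ← integral_const_mul]
  congr 1 with x
  rw [← integral_const_mul]
  congr 1 with y
  rw [G_zero]
  field_simp

lemma scaled_smul (ρ : E3 → ℝ) {r : ℝ} (hr : 0 < r) (u : E3) :
    scaled ρ r (r • u) = (r ^ 3)⁻¹ * ρ u := by
  rw [scaled, inv_smul_smul₀ hr.ne', zpow_neg]
  norm_cast

lemma integral_scaled_mul (ρ f : E3 → ℝ) {r : ℝ} (hr : 0 < r) :
    ∫ x : E3, scaled ρ r x * f x = ∫ u : E3, ρ u * f (r • u) := by
  have h := Measure.integral_comp_smul_of_nonneg volume (fun x => scaled ρ r x * f x) r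
    (hR := hr.le)
  simp only [scaled_smul ρ hr, finrank_euclideanSpace_fin, smul_eq_mul, mul_assoc,
    integral_const_mul] at h
  rwa [mul_right_inj' (inv_ne_zero (pow_ne_zero 3 hr.ne')), eq_comm] at h

lemma integral_integral_scaled (ρ : E3 → ℝ) (K : E3 → ℝ) {r : ℝ} (hr : 0 < r) :
    ∫ x : E3, ∫ y : E3, scaled ρ r x * K (x - y) * scaled ρ r y
      = ∫ x : E3, ∫ y : E3, ρ x * K (r • (x - y)) * ρ y := by
  simp only [mul_assoc, integral_const_mul]
  rw [integral_scaled_mul ρ _ hr]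
  congr 1 with x
  simp only [mul_comm (K _) (scaled ρ r _), mul_comm (K _) (ρ _), smul_sub]
  rw [integral_scaled_mul ρ _ hr]

lemma yukawaEnergy_scaled (ρ : E3 → ℝ) {r : ℝ} (hr : 0 < r) (μ : ℝ) :
    yukawaEnergy (scaled ρ r) μ = r⁻¹ * yukawaEnergy ρ (r ^ 2 * μ) := by
  rw [yukawaEnergy, integral_integral_scaled ρ _ hr, yukawaEnergy, ← integral_const_mul]
  congr 1 with x
  rw [← integral_const_mul]
  congr 1 with y
  rw [G_smul hr]
  ring

lemma coulombEnergy_scaled (ρ : E3 → ℝ) {r : ℝ} (hr : 0 < r) :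
    coulombEnergy (scaled ρ r) = r⁻¹ * coulombEnergy ρ := by
  simp only [coulombEnergy_eq_yukawaEnergy_zero, yukawaEnergy_scaled ρ hr, mul_zero]

lemma integrable_yukawa_integrand {ρ : E3 → ℝ} (hmeas : Measurable ρ)
    (hfin : Integrable (fun p : E3 × E3 => ρ p.1 * ρ p.2 / ‖p.1 - p.2‖)) (μ : ℝ) :
    Integrable fun p : E3 × E3 => ρ p.1 * G μ (p.1 - p.2) * ρ p.2 := by
  have h0 : Integrable fun p : E3 × E3 => ρ p.1 * G 0 (p.1 - p.2) * ρ p.2 := by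
    refine (hfin.const_mul (4 * π)⁻¹).congr (ae_of_all _ fun p => ?_)
    simp only [G_zero]
    field_simp
  refine h0.mono ?_ (ae_of_all _ fun p => norm_mul_G_mul_le_G_zero _ _ μ _)
  exact ((hmeas.comp measurable_fst).mul ((measurable_G μ).comp
    (measurable_fst.sub measurable_snd))).mul (hmeas.comp measurable_snd) |>.aestronglyMeasurable

lemma continuous_yukawaEnergy {ρ : E3 → ℝ} (hmeas : Measurable ρ)
    (hfin : Integrable (fun p : E3 × E3 => ρ p.1 * ρ p.2 / ‖p.1 - p.2‖)) :
    Continuous (yukawaEnergy ρ) := by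
  have hprod (μ : ℝ) : yukawaEnergy ρ μ = ∫ p : E3 × E3, ρ p.1 * G μ (p.1 - p.2) * ρ p.2 :=
    (integral_prod _ (integrable_yukawa_integrand hmeas hfin μ)).symm
  rw [funext hprod]
  exact continuous_of_dominated
    (fun μ => (integrable_yukawa_integrand hmeas hfin μ).aestronglyMeasurable)
    (fun μ => ae_of_all _ fun p => norm_mul_G_mul_le_G_zero _ _ μ _)
    (integrable_yukawa_integrand hmeas hfin 0).norm
    (ae_of_all _ fun p => (continuous_const.mul (continuous_G_param _)).mul continuous_const)

theorem stmt_5_general (ρ : E3 → ℝ) (m c e lam : ℝ)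
    (hc : 0 < c) (he : 0 < e)
    (hmeas : Measurable ρ)
    (hfin : Integrable (fun p : E3 × E3 => ρ p.1 * ρ p.2 / ‖p.1 - p.2‖))
    (hEpos : 0 < coulombEnergy ρ) :
    Tendsto (fun r => yukawaPairing ρ lam r / m_r ρ m c e r)
      (nhdsWithin 0 (Set.Ioi 0))
      (nhds (-(3 * c ^ 2) / (8 * π * e ^ 2))) := by
  have hK : 0 < 8 * π * e ^ 2 / (3 * c ^ 2) := by positivity
  have hnum : Tendsto (fun r : ℝ => yukawaEnergy ρ (r ^ 2 * lam)) (nhdsWithin 0 (Set.Ioi 0))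
      (nhds (coulombEnergy ρ)) := by
    rw [coulombEnergy_eq_yukawaEnergy_zero]
    refine (continuous_yukawaEnergy hmeas hfin).continuousAt.tendsto.comp
      (tendsto_nhdsWithin_of_tendsto_nhds ?_)
    exact (continuous_pow 2 |>.mul continuous_const).tendsto' 0 0 (by simp)
  have hden : Tendsto (fun r : ℝ => r * m - 8 * π * e ^ 2 / (3 * c ^ 2) * coulombEnergy ρ)
      (nhdsWithin 0 (Set.Ioi 0)) (nhds (-(8 * π * e ^ 2 / (3 * c ^ 2) * coulombEnergy ρ))) := by
    refine tendsto_nhdsWithin_of_tendsto_nhds (Continuous.tendsto' ?_ 0 _ (by simp))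
    fun_prop
  have hvalue : coulombEnergy ρ / -(8 * π * e ^ 2 / (3 * c ^ 2) * coulombEnergy ρ)
      = -(3 * c ^ 2) / (8 * π * e ^ 2) := by
    field_simp
  rw [← hvalue]
  refine (hnum.div hden (neg_ne_zero.mpr (mul_pos hK hEpos).ne')).congr' ?_
  filter_upwards [self_mem_nhdsWithin] with r (hr : 0 < r)
  simp only [Pi.div_apply]
  rw [yukawaPairing, ← yukawaEnergy, yukawaEnergy_scaled ρ hr, m_r, coulombEnergy_scaled ρ hr]
  field_simp

theorem stmt_5 (ρ : E3 → ℝ) (m c e lam : ℝ)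
    (hm : 0 < m) (hc : 0 < c) (he : 0 < e) (hlam : 0 < lam)
    (hmeas : Measurable ρ) (hpos : ∀ x, 0 ≤ ρ x)
    (hprob : ∫ x : E3, ρ x = 1)
    (hsymm : ∀ x y : E3, ‖x‖ = ‖y‖ → ρ x = ρ y)
    (hsupp : HasCompactSupport ρ)
    (hfin : Integrable (fun p : E3 × E3 => ρ p.1 * ρ p.2 / ‖p.1 - p.2‖))
    (hEpos : 0 < coulombEnergy ρ) :
    Tendsto (fun r => yukawaPairing ρ lam r / m_r ρ m c e r)
      (nhdsWithin 0 (Set.Ioi 0))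
      (nhds (-(3 * c ^ 2) / (8 * π * e ^ 2))) :=
  stmt_5_general ρ m c e lam hc he hmeas hfin hEpos
end
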